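/- arXiv:quant-ph/0403069 — 2 statements merged into one kernel-verified Lean document; each statement's English description precedes it below -/
import Mathlib

section
/- Let n be a positive integer and let π ∈ S_n satisfy π² = id. Then the matrix product ρ_π^+ · ρ_π^- is the zero matrix; that is, the quantum states ρ_π^+ and ρ_π^- have orthogonal supports (this is the mathematical content of the fact that ρ_π^+ and ρ_π^- can be distinguished with probability 1 when π is known). -/
open Finset

/-- The quantum state `ρ_π^+` as an `n!×n!` complex matrix indexed by `S_n`:
`ρ_π^+ = (1/(2·n!)) Σ_{σ∈S_n} (e_σ + e_{σπ})(e_σ + e_{σπ})†`. -/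
noncomputable def rhoPlus (n : ℕ) (π : Equiv.Perm (Fin n)) :
    Matrix (Equiv.Perm (Fin n)) (Equiv.Perm (Fin n)) ℂ :=
  Matrix.of fun a b =>
    (1 / (2 * (Nat.factorial n : ℂ))) *
      ∑ σ : Equiv.Perm (Fin n),
        ((if a = σ then (1 : ℂ) else 0) + (if a = σ * π then (1 : ℂ) else 0)) *
        ((if b = σ then (1 : ℂ) else 0) + (if b = σ * π then (1 : ℂ) else 0))

/-- The quantum state `ρ_π^-` as an `n!×n!` complex matrix indexed by `S_n`:
`ρ_π^- = (1/(2·n!)) Σ_{σ∈S_n} (e_σ - e_{σπ})(e_σ - e_{σπ})†`. -/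
noncomputable def rhoMinus (n : ℕ) (π : Equiv.Perm (Fin n)) :
    Matrix (Equiv.Perm (Fin n)) (Equiv.Perm (Fin n)) ℂ :=
  Matrix.of fun a b =>
    (1 / (2 * (Nat.factorial n : ℂ))) *
      ∑ σ : Equiv.Perm (Fin n),
        ((if a = σ then (1 : ℂ) else 0) - (if a = σ * π then (1 : ℂ) else 0)) *
        ((if b = σ then (1 : ℂ) else 0) - (if b = σ * π then (1 : ℂ) else 0))

/-- Key computation: the Gram-type sum appearing in `ρ_π^±`, with sign parameter `s`. -/
theorem rho_key_sum (n : ℕ) (π : Equiv.Perm (Fin n)) (hπ : π * π = 1) (s : ℂ)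
    (a b : Equiv.Perm (Fin n)) :
    (∑ σ : Equiv.Perm (Fin n),
        ((if a = σ then (1 : ℂ) else 0) + s * (if a = σ * π then (1 : ℂ) else 0)) *
        ((if b = σ then (1 : ℂ) else 0) + s * (if b = σ * π then (1 : ℂ) else 0)))
    = (1 + s * s) * (if a = b then 1 else 0) + 2 * s * (if a * π = b then 1 else 0) := by
  have hc : ∀ x σ : Equiv.Perm (Fin n), (x = σ * π) ↔ (σ = x * π) := by
    intro x σ
    constructor <;> rintro rfl <;> simp [mul_assoc, hπ]
  have h2 : (b * π = a) ↔ (a * π = b) := by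
    constructor <;> rintro rfl <;> simp [mul_assoc, hπ]
  simp only [hc, eq_comm (a := a)]
  simp [add_mul, mul_add, Finset.sum_add_distrib, mul_ite, ite_mul, Finset.sum_ite_eq',
    eq_comm (a := b), h2]
  split_ifs <;> ring

theorem rhoPlus_apply (n : ℕ) (π : Equiv.Perm (Fin n)) (hπ : π * π = 1)
    (a b : Equiv.Perm (Fin n)) :
    rhoPlus n π a b = (1 / (Nat.factorial n : ℂ)) *
      ((if a = b then 1 else 0) + (if a * π = b then 1 else 0)) := by
  have := rho_key_sum n π hπ 1 a b
  simp only [one_mul] at this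
  rw [rhoPlus, Matrix.of_apply, this]
  have hfac : (Nat.factorial n : ℂ) ≠ 0 := by
    exact_mod_cast Nat.cast_ne_zero.mpr n.factorial_ne_zero
  field_simp
  split_ifs <;> ring

theorem rhoMinus_apply (n : ℕ) (π : Equiv.Perm (Fin n)) (hπ : π * π = 1)
    (a b : Equiv.Perm (Fin n)) :
    rhoMinus n π a b = (1 / (Nat.factorial n : ℂ)) *
      ((if a = b then 1 else 0) - (if a * π = b then 1 else 0)) := by
  have := rho_key_sum n π hπ (-1) a b
  simp only [neg_one_mul, ← sub_eq_add_neg] at this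
  rw [rhoMinus, Matrix.of_apply, this]
  have hfac : (Nat.factorial n : ℂ) ≠ 0 := by
    exact_mod_cast Nat.cast_ne_zero.mpr n.factorial_ne_zero
  field_simp
  split_ifs <;> ring

/-- For an involution `π`, the states `ρ_π^+` and `ρ_π^-` have orthogonal supports:
their matrix product is the zero matrix. -/
theorem rhoPlus_mul_rhoMinus_eq_zero (n : ℕ) (hn : 0 < n) (π : Equiv.Perm (Fin n))
    (hπ : π * π = 1) : rhoPlus n π * rhoMinus n π = 0 := by
  ext a b
  rw [Matrix.mul_apply, Matrix.zero_apply]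
  have h1 : ∀ c : Equiv.Perm (Fin n), (a * π = c) ↔ (c = a * π) := fun c => eq_comm
  have h3 : (a * π * π = b) ↔ (a = b) := by simp [mul_assoc, hπ]
  have h4 : (a * π = b) ↔ (a = b * π) := by
    constructor <;> rintro rfl <;> simp [mul_assoc, hπ]
  calc ∑ c, rhoPlus n π a c * rhoMinus n π c b
      = ∑ c : Equiv.Perm (Fin n), (1 / (Nat.factorial n : ℂ))^2 *
          (((if a = c then (1:ℂ) else 0) + (if c = a * π then 1 else 0)) *
           ((if c = b then 1 else 0) - (if c = b * π then 1 else 0))) := by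
        refine Finset.sum_congr rfl fun c _ => ?_
        rw [rhoPlus_apply n π hπ, rhoMinus_apply n π hπ]
        have e1 : (if a * π = c then (1:ℂ) else 0) = (if c = a * π then 1 else 0) := by
          simp [eq_comm]
        have e2 : (if c * π = b then (1:ℂ) else 0) = (if c = b * π then 1 else 0) := by
          congr 1
          simp only [eq_iff_iff]
          constructor <;> rintro rfl <;> simp [mul_assoc, hπ]
        rw [e1, e2]; ring
    _ = 0 := by
        rw [← Finset.mul_sum]
        have h5 : (a * π = b * π) ↔ (a = b) := mul_left_inj π
        simp only [add_mul, mul_sub, sub_mul, ite_mul, mul_ite, one_mul, zero_mul, mul_one,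
          mul_zero, Finset.sum_sub_distrib, Finset.sum_add_distrib, Finset.sum_ite_eq,
          Finset.sum_ite_eq', Finset.mem_univ, if_true]
        have e3 : (b = a * π) ↔ (a = b * π) := by
          constructor <;> rintro rfl <;> simp [mul_assoc, hπ]
        have e4 : (b * π = a * π) ↔ (a = b) := by
          rw [mul_left_inj]; exact eq_comm
        simp only [e3, e4]
        ring
end

section
/- Let n be a positive integer and let D be the n!×n! diagonal matrix with rows and columns indexed by S_n whose (σ,σ) entry is sgn(σ) ∈ {+1,−1}. If π ∈ S_n is an odd permutation with π² = id, then D ρ_π^+ D = ρ_π^-. Moreover, D ι D = ι. (This is the correctness of the conversion algorithm, which converts ρ_π^+ into ρ_π^- without knowledge of π and leaves the maximally mixed state unchanged.) -/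
/-- The maximally mixed state `ι = (1/n!)·I` over `S_n`. -/
noncomputable def iotaMat (n : ℕ) :
    Matrix (Equiv.Perm (Fin n)) (Equiv.Perm (Fin n)) ℂ :=
  ((Nat.factorial n : ℂ))⁻¹ • (1 : Matrix (Equiv.Perm (Fin n)) (Equiv.Perm (Fin n)) ℂ)

/-- The diagonal sign matrix `D` with `(σ,σ)` entry `sgn(σ)`. -/
noncomputable def signDiag (n : ℕ) :
    Matrix (Equiv.Perm (Fin n)) (Equiv.Perm (Fin n)) ℂ :=
  Matrix.diagonal fun σ => ((Equiv.Perm.sign σ : ℤ) : ℂ)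

section aux
variable {n : ℕ}

private lemma signC_mul_self (a : Equiv.Perm (Fin n)) :
    ((Equiv.Perm.sign a : ℤ) : ℂ) * ((Equiv.Perm.sign a : ℤ) : ℂ) = 1 := by
  have h : (Equiv.Perm.sign a : ℤ) * (Equiv.Perm.sign a : ℤ) = 1 := by
    rcases Int.units_eq_one_or (Equiv.Perm.sign a) with h | h <;> simp [h]
  exact_mod_cast congrArg (Int.cast : ℤ → ℂ) h

private lemma key_sum (π : Equiv.Perm (Fin n)) (hπ : π * π = 1) (s : ℂ)
    (a b : Equiv.Perm (Fin n)) :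
    (∑ σ : Equiv.Perm (Fin n),
        ((if a = σ then (1 : ℂ) else 0) + s * (if a = σ * π then (1 : ℂ) else 0)) *
        ((if b = σ then (1 : ℂ) else 0) + s * (if b = σ * π then (1 : ℂ) else 0))) =
    (1 + s * s) * (if b = a then (1:ℂ) else 0) +
      (s + s) * (if b * π = a then (1:ℂ) else 0) := by
  have hiff : ∀ (x σ : Equiv.Perm (Fin n)), (x = σ * π) ↔ (x * π = σ) := by
    intro x σ
    constructor
    · intro h; rw [h, mul_assoc, hπ, mul_one]
    · intro h; rw [← h, mul_assoc, hπ, mul_one]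
  simp only [hiff]
  simp only [add_mul, mul_add, Finset.sum_add_distrib, ite_mul, mul_ite, one_mul, zero_mul,
    mul_one, mul_zero, Finset.sum_ite_eq, Finset.mem_univ, if_true]
  have hcancel : (b * π = a * π) ↔ (b = a) :=
    ⟨fun h => mul_right_cancel h, fun h => by rw [h]⟩
  have h3 : (a * π = b) ↔ (b * π = a) := by
    constructor
    · intro h; rw [← h, mul_assoc, hπ, mul_one]
    · intro h; rw [← h, mul_assoc, hπ, mul_one]
  have h4 : (a = b * π) ↔ (b * π = a) := by rw [eq_comm]
  have h5 : (a * π = b * π) ↔ (b = a) :=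
    ⟨fun h => (mul_right_cancel h).symm, fun h => by rw [h]⟩
  have h6 : (a = b) ↔ (b = a) := eq_comm
  rw [if_congr h6 rfl rfl, if_congr h3 rfl rfl, if_congr h4 rfl rfl, if_congr h5 rfl rfl]
  split_ifs <;> ring
end aux

/-- Correctness of the conversion algorithm: for an odd involution `π`,
`D ρ_π^+ D = ρ_π^-`, and moreover `D ι D = ι`. -/
theorem signDiag_conversion (n : ℕ) (hn : 0 < n) (π : Equiv.Perm (Fin n))
    (hπ : π * π = 1) (hodd : Equiv.Perm.sign π = -1) :
    signDiag n * rhoPlus n π * signDiag n = rhoMinus n π ∧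
    signDiag n * iotaMat n * signDiag n = iotaMat n := by
  have hπne : π ≠ 1 := by
    intro h; rw [h] at hodd; simp at hodd
  constructor
  · ext a b
    simp only [signDiag, Matrix.mul_diagonal, Matrix.diagonal_mul, rhoPlus, rhoMinus,
      Matrix.of_apply]
    have hp := key_sum π hπ 1 a b
    simp only [one_mul] at hp
    norm_num at hp
    have hm := key_sum π hπ (-1) a b
    simp only [neg_one_mul, ← sub_eq_add_neg] at hm
    norm_num at hm
    rw [hp, hm]
    by_cases h1 : b = a
    · subst h1
      have h2 : ¬(b * π = b) := by
        intro h
        apply hπne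
        apply mul_left_cancel (a := b)
        rw [mul_one]; exact h
      rw [if_pos rfl, if_neg h2, if_neg h2]
      have hsq := signC_mul_self b
      linear_combination (2 * (1 / (2 * (Nat.factorial n : ℂ)))) * hsq
    · by_cases h2 : b * π = a
      · rw [if_neg h1, if_pos h2, if_pos h2]
        have hsgn : ((Equiv.Perm.sign a : ℤ) : ℂ) = -((Equiv.Perm.sign b : ℤ) : ℂ) := by
          have : Equiv.Perm.sign a = - Equiv.Perm.sign b := by
            rw [← h2, map_mul, hodd, mul_neg_one]
          rw [this]; push_cast; ring
        rw [hsgn]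
        have hsq := signC_mul_self b
        linear_combination (-2 * (1 / (2 * (Nat.factorial n : ℂ)))) * hsq
      · rw [if_neg h1, if_neg h2, if_neg h2]
        ring
  · ext a b
    simp only [signDiag, iotaMat, Matrix.mul_diagonal, Matrix.diagonal_mul,
      Matrix.smul_apply, Matrix.one_apply, smul_eq_mul]
    by_cases h : a = b
    · subst h
      rw [if_pos rfl]
      have hsq := signC_mul_self a
      linear_combination ((Nat.factorial n : ℂ))⁻¹ * hsq
    · rw [if_neg h]
      ring
end
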